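/- arXiv:math/0606069 — 3 statements merged into one kernel-verified Lean document; each statement's English description precedes it below -/
import Mathlib

section
/- Let F : [0,T]² → ℝ vanish on the axes (F(a,0)=F(0,b)=0 for all a,b) and have bounded planar variation, i.e. sup over subdivisions τ = {0=t₀<…<tₙ=T} of ∑_{i,j} |Δ_{]tᵢ,tᵢ₊₁]×]tⱼ,tⱼ₊₁]} F| is finite, where Δ_I F = F(b₁,b₂)+F(a₁,a₂)−F(a₁,b₂)−F(b₁,a₂) for I = ]a₁,b₁]×]a₂,b₂]. Then F = F⁺ − F⁻ where F⁺ and F⁻ are planarly increasing (Δ_I F⁺ ≥ 0 and Δ_I F⁻ ≥ 0 for all rectangles I ⊆ [0,T]²) and vanish on the axes. -/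
/-!
Take for `F⁺(x, y)` the positive planar variation of `F` on `[0, x] × [0, y]`: the supremum,
over grids, of the sums of the positive parts `(Δ_I F)⁺` of the increments over the grid cells.
It is finite by bounded variation, and it vanishes on the axes. Increments are additive over
adjacent rectangles, so their positive parts are subadditive and refining a grid can only
increase its sum. Gluing, after a common refinement, a grid of `[0, a₁] × [0, b₂]`, a grid of
`[0, b₁] × [0, a₂]` and the cell `I = ]a₁, b₁] × ]a₂, b₂]` into a grid of `[0, b₁] × [0, b₂]`
and one of `[0, a₁] × [0, a₂]` gives `Δ_I F⁺ ≥ (Δ_I F)⁺`. Hence both `F⁺` and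
`F⁻ := F⁺ - F` are planarly increasing.
-/

open Set

noncomputable section

/-- Planar increment of `F` over the rectangle `]a₁,b₁] × ]a₂,b₂]`. -/
def planarInc (F : ℝ × ℝ → ℝ) (a₁ b₁ a₂ b₂ : ℝ) : ℝ :=
  F (b₁, b₂) + F (a₁, a₂) - F (a₁, b₂) - F (b₁, a₂)

/-- `F` vanishes on the axes. -/
def VanishesOnAxes (F : ℝ × ℝ → ℝ) : Prop :=
  ∀ a : ℝ, 0 ≤ a → F (a, 0) = 0 ∧ F (0, a) = 0

/-- `F` is planarly increasing on `[0,T]²`. -/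
def PlanarlyIncreasingOn (F : ℝ × ℝ → ℝ) (T : ℝ) : Prop :=
  ∀ a₁ b₁ a₂ b₂ : ℝ, 0 ≤ a₁ → a₁ ≤ b₁ → b₁ ≤ T → 0 ≤ a₂ → a₂ ≤ b₂ → b₂ ≤ T →
    0 ≤ planarInc F a₁ b₁ a₂ b₂

/-- `F` has bounded planar variation on `[0,T]²`. -/
def BoundedPlanarVariation (F : ℝ × ℝ → ℝ) (T : ℝ) : Prop :=
  ∃ M : ℝ, ∀ (n : ℕ) (t : Fin (n + 1) → ℝ), Monotone t → t 0 = 0 → t (Fin.last n) = T →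
    ∑ i : Fin n, ∑ j : Fin n,
      |planarInc F (t i.castSucc) (t i.succ) (t j.castSucc) (t j.succ)| ≤ M

open scoped List

section ChainSum

variable {α β M : Type*}

def chainSum [AddCommMonoid M] (g : α → α → M) : α → List α → M
  | _, [] => 0
  | a, x :: l => g a x + chainSum g x l

structure IsNonnegSubadditive [AddCommMonoid M] [PartialOrder M] (g : α → α → M) : Prop where
  nonneg : ∀ x y, 0 ≤ g x y
  le_add : ∀ x y z, g x z ≤ g x y + g y z

section Basic

variable [AddCommMonoid M] (g g' : α → α → M)

@[simp] lemma chainSum_nil (a : α) : chainSum g a [] = 0 := rfl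

@[simp] lemma chainSum_cons (a x : α) (l : List α) :
    chainSum g a (x :: l) = g a x + chainSum g x l := rfl

lemma chainSum_append_cons (a m : α) (l₁ l₂ : List α) :
    chainSum g a (l₁ ++ m :: l₂) = chainSum g a (l₁ ++ [m]) + chainSum g m l₂ := by
  induction l₁ generalizing a with
  | nil => simp
  | cons x l ih => simp [ih, add_assoc]

lemma chainSum_add (a : α) (l : List α) :
    chainSum (fun x y => g x y + g' x y) a l = chainSum g a l + chainSum g' a l := by
  induction l generalizing a with
  | nil => simp
  | cons x l ih => simp [ih, add_add_add_comm]

lemma chainSum_eq_sum_get (a : α) (l : List α) :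
    chainSum g a l = ∑ i : Fin l.length, g ((a :: l).get i.castSucc) ((a :: l).get i.succ) := by
  induction l generalizing a with
  | nil => simp
  | cons x l ih => simp [Fin.sum_univ_succ, ih]

end Basic

section Ordered

variable [AddCommMonoid M] [PartialOrder M] [IsOrderedAddMonoid M] {g g' : α → α → M}

lemma chainSum_le_chainSum (h : ∀ x y, g x y ≤ g' x y) (a : α) (l : List α) :
    chainSum g a l ≤ chainSum g' a l := by
  induction l generalizing a with
  | nil => simp
  | cons x l ih => exact add_le_add (h a x) (ih x)

lemma chainSum_nonneg (h : ∀ x y, 0 ≤ g x y) (a : α) (l : List α) : 0 ≤ chainSum g a l := by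
  induction l generalizing a with
  | nil => simp
  | cons x l ih => exact add_nonneg (h a x) (ih x)

namespace IsNonnegSubadditive

lemma chainSum_le_add_chainSum (hg : IsNonnegSubadditive g) (a x : α) (l : List α) :
    chainSum g a l ≤ g a x + chainSum g x l := by
  cases l with
  | nil => simpa using hg.nonneg a x
  | cons y l =>
    simpa [add_assoc] using add_le_add_left (hg.le_add a x y) (chainSum g y l)

lemma chainSum_le_of_sublist (hg : IsNonnegSubadditive g) {l l' : List α} (h : l <+ l')
    (a : α) :
    chainSum g a l ≤ chainSum g a l' := by
  induction h generalizing a with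
  | slnil => rfl
  | cons x _ ih => exact (hg.chainSum_le_add_chainSum a x _).trans (add_le_add_right (ih x) _)
  | cons_cons x _ ih => exact add_le_add_right (ih x) _

end IsNonnegSubadditive

lemma IsNonnegSubadditive.chainSum {h : α → α → β → β → M}
    (hh : ∀ y y', IsNonnegSubadditive fun x x' => h x x' y y') (c : β) (t : List β) :
    IsNonnegSubadditive fun x x' => chainSum (h x x') c t where
  nonneg x x' := chainSum_nonneg (fun y y' => (hh y y').nonneg x x') c t
  le_add x x' x'' := by
    rw [← chainSum_add]
    exact chainSum_le_chainSum (fun y y' => (hh y y').le_add x x' x'') c t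

end Ordered

end ChainSum

section GridSum

variable {α β M : Type*} [AddCommMonoid M]

def gridSum (h : α → α → β → β → M) (a : α) (s : List α) (c : β) (t : List β) : M :=
  chainSum (fun x x' => chainSum (h x x') c t) a s

variable (h : α → α → β → β → M) (a : α) (s : List α) (c : β) (t : List β)

@[simp] lemma gridSum_singleton (b : α) (d : β) : gridSum h a [b] c [d] = h a b c d := by
  simp [gridSum]

lemma gridSum_append_cons_left (m : α) (s₁ s₂ : List α) :
    gridSum h a (s₁ ++ m :: s₂) c t = gridSum h a (s₁ ++ [m]) c t + gridSum h m s₂ c t :=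
  chainSum_append_cons _ a m s₁ s₂

lemma gridSum_append_cons_right (m : β) (t₁ t₂ : List β) :
    gridSum h a s c (t₁ ++ m :: t₂) = gridSum h a s c (t₁ ++ [m]) + gridSum h a s m t₂ := by
  simp only [gridSum, ← chainSum_add]
  congr 1
  funext x x'
  exact chainSum_append_cons _ c m t₁ t₂

lemma gridSum_eq_sum_get :
    gridSum h a s c t = ∑ i : Fin s.length, ∑ j : Fin t.length,
      h ((a :: s).get i.castSucc) ((a :: s).get i.succ) ((c :: t).get j.castSucc)
        ((c :: t).get j.succ) := by
  simp only [gridSum, chainSum_eq_sum_get]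

variable {h} [PartialOrder M] [IsOrderedAddMonoid M]

lemma gridSum_le_gridSum {h' : α → α → β → β → M} (hh : ∀ x x' y y', h x x' y y' ≤ h' x x' y y') :
    gridSum h a s c t ≤ gridSum h' a s c t :=
  chainSum_le_chainSum (fun x x' => chainSum_le_chainSum (hh x x') c t) a s

lemma gridSum_le_of_sublist
    (h₁ : ∀ x x', IsNonnegSubadditive (h x x'))
    (h₂ : ∀ y y', IsNonnegSubadditive fun x x' => h x x' y y')
    {s s' : List α} {t t' : List β} (hs : s <+ s') (ht : t <+ t') :
    gridSum h a s c t ≤ gridSum h a s' c t' :=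
  ((IsNonnegSubadditive.chainSum h₂ c t).chainSum_le_of_sublist hs a).trans <|
    chainSum_le_chainSum (fun x x' => (h₁ x x').chainSum_le_of_sublist ht c) a s'

end GridSum

/-- `s` lists the interior points of the subdivision `a :: s ++ [b]` of `[a, b]`; repeated
points (degenerate cells) are allowed. -/
structure IsPartition {α : Type*} [Preorder α] (a b : α) (s : List α) : Prop where
  le : a ≤ b
  sorted : s.Pairwise (· ≤ ·)
  mem_Icc : ∀ x ∈ s, x ∈ Icc a b

namespace IsPartition

variable {α : Type*}

section Preorder

variable [Preorder α] {a b m : α} {s s₁ s₂ : List α}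

lemma nil (hab : a ≤ b) : IsPartition a b [] := ⟨hab, .nil, by simp⟩

lemma append_cons (h₁ : IsPartition a m s₁) (h₂ : IsPartition m b s₂) :
    IsPartition a b (s₁ ++ m :: s₂) where
  le := h₁.le.trans h₂.le
  sorted := by
    simp only [List.pairwise_append, List.pairwise_cons, List.mem_cons]
    refine ⟨h₁.sorted, ⟨fun x hx => (h₂.mem_Icc x hx).1, h₂.sorted⟩, ?_⟩
    rintro x hx y (rfl | hy)
    exacts [(h₁.mem_Icc x hx).2, (h₁.mem_Icc x hx).2.trans (h₂.mem_Icc y hy).1]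
  mem_Icc x hx := by
    simp only [List.mem_append, List.mem_cons] at hx
    rcases hx with hx | rfl | hx
    · exact ⟨(h₁.mem_Icc x hx).1, (h₁.mem_Icc x hx).2.trans h₂.le⟩
    · exact ⟨h₁.le, h₂.le⟩
    · exact ⟨h₁.le.trans (h₂.mem_Icc x hx).1, (h₂.mem_Icc x hx).2⟩

lemma pairwise_cons_append (hs : IsPartition a b s) : (a :: (s ++ [b])).Pairwise (· ≤ ·) := by
  have h := hs.append_cons (nil le_rfl : IsPartition b b [])
  exact List.pairwise_cons.2 ⟨fun x hx => (h.mem_Icc x hx).1, h.sorted⟩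

lemma of_append_cons (h : IsPartition a b (s₁ ++ m :: s₂)) :
    IsPartition a m s₁ ∧ IsPartition m b s₂ := by
  have hm := h.mem_Icc m (by simp)
  obtain ⟨hs₁, ⟨hms₂, hs₂⟩, hcross⟩ := by
    simpa only [List.pairwise_append, List.pairwise_cons] using h.sorted
  refine ⟨⟨hm.1, hs₁, fun x hx => ⟨(h.mem_Icc x (by simp [hx])).1, hcross x hx m (by simp)⟩⟩,
    ⟨hm.2, hs₂, fun x hx => ⟨hms₂ x hx, (h.mem_Icc x (by simp [hx])).2⟩⟩⟩

end Preorder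

lemma get_cons_append_eq [PartialOrder α] {a : α} {s : List α} (hs : IsPartition a a s)
    (i : Fin (a :: (s ++ [a])).length) : (a :: (s ++ [a])).get i = a := by
  have hi := List.get_mem _ i
  rw [List.mem_cons, List.mem_append, List.mem_singleton] at hi
  rcases hi with hi | hi | hi
  exacts [hi, le_antisymm (hs.mem_Icc _ hi).2 (hs.mem_Icc _ hi).1, hi]

variable [LinearOrder α] {a b m : α} {s t : List α}

lemma exists_common_refinement (hs : IsPartition a b s) (ht : IsPartition a b t) :
    ∃ w, IsPartition a b w ∧ s <+ w ∧ t <+ w := by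
  refine ⟨(s ++ t).insertionSort (· ≤ ·), ⟨hs.le, List.pairwise_insertionSort _ _, ?_⟩,
    List.sublist_insertionSort hs.sorted (List.sublist_append_left s t),
    List.sublist_insertionSort ht.sorted (List.sublist_append_right s t)⟩
  intro x hx
  rcases List.mem_append.1 ((List.perm_insertionSort _ _).mem_iff.1 hx) with hx | hx
  exacts [hs.mem_Icc x hx, ht.mem_Icc x hx]

lemma exists_split (hs : IsPartition a b s) (ham : a ≤ m) (hmb : m ≤ b) :
    ∃ s₁ s₂, IsPartition a m s₁ ∧ IsPartition m b s₂ ∧ s <+ s₁ ++ m :: s₂ := by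
  obtain ⟨w, hw, hsw, hmw⟩ :=
    hs.exists_common_refinement (t := [m]) ⟨hs.le, List.pairwise_singleton _ m, by simp [ham, hmb]⟩
  obtain ⟨s₁, s₂, rfl⟩ := List.append_of_mem (hmw.subset (List.mem_singleton_self m))
  exact ⟨s₁, s₂, hw.of_append_cons.1, hw.of_append_cons.2, hsw⟩

end IsPartition

lemma posPart_add_le {α : Type*} [AddCommGroup α] [LinearOrder α] [IsOrderedAddMonoid α]
    (x y : α) : (x + y)⁺ ≤ x⁺ + y⁺ :=
  sup_le (add_le_add (le_posPart x) (le_posPart y))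
    (add_nonneg (posPart_nonneg x) (posPart_nonneg y))

lemma posPart_le_abs {α : Type*} [AddCommGroup α] [LinearOrder α] [IsOrderedAddMonoid α]
    (x : α) : x⁺ ≤ |x| :=
  sup_le (le_abs_self x) (abs_nonneg x)

section PlanarVariation

variable (F : ℝ × ℝ → ℝ)

lemma planarInc_add_adjacent_left (x x' x'' y y' : ℝ) :
    planarInc F x x' y y' + planarInc F x' x'' y y' = planarInc F x x'' y y' := by
  simp only [planarInc]; ring

lemma planarInc_add_adjacent_right (x x' y y' y'' : ℝ) :
    planarInc F x x' y y' + planarInc F x x' y' y'' = planarInc F x x' y y'' := by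
  simp only [planarInc]; ring

lemma planarInc_sub (G : ℝ × ℝ → ℝ) (x x' y y' : ℝ) :
    planarInc (fun p => G p - F p) x x' y y' = planarInc G x x' y y' - planarInc F x x' y y' := by
  simp only [planarInc]; ring

def posPlanarInc (x x' y y' : ℝ) : ℝ := (planarInc F x x' y y')⁺

lemma isNonnegSubadditive_posPlanarInc_left (y y' : ℝ) :
    IsNonnegSubadditive fun x x' => posPlanarInc F x x' y y' where
  nonneg _ _ := posPart_nonneg _
  le_add x x' x'' := by
    simpa only [posPlanarInc, planarInc_add_adjacent_left] using
      posPart_add_le (planarInc F x x' y y') (planarInc F x' x'' y y')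

lemma isNonnegSubadditive_posPlanarInc_right (x x' : ℝ) :
    IsNonnegSubadditive (posPlanarInc F x x') where
  nonneg _ _ := posPart_nonneg _
  le_add y y' y'' := by
    simpa only [posPlanarInc, planarInc_add_adjacent_right] using
      posPart_add_le (planarInc F x x' y y') (planarInc F x x' y' y'')

lemma gridSum_posPlanarInc_mono {a c : ℝ} {s s' t t' : List ℝ} (hs : s <+ s')
    (ht : t <+ t') : gridSum (posPlanarInc F) a s c t ≤ gridSum (posPlanarInc F) a s' c t' :=
  gridSum_le_of_sublist a c (isNonnegSubadditive_posPlanarInc_right F)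
    (isNonnegSubadditive_posPlanarInc_left F) hs ht

def posVarSums (x y : ℝ) : Set ℝ :=
  {v | ∃ s t, IsPartition 0 x s ∧ IsPartition 0 y t ∧
    gridSum (posPlanarInc F) 0 (s ++ [x]) 0 (t ++ [y]) = v}

/-- Only meaningful where `posVarSums F x y` is bounded above; elsewhere `sSup` returns `0`. -/
def posPlanarVariation (x y : ℝ) : ℝ := sSup (posVarSums F x y)

variable {F} {T : ℝ}

lemma posVarSums_nonempty {x y : ℝ} (hx : 0 ≤ x) (hy : 0 ≤ y) : (posVarSums F x y).Nonempty :=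
  ⟨_, [], [], .nil hx, .nil hy, rfl⟩

lemma BoundedPlanarVariation.exists_gridSum_abs_le (hbv : BoundedPlanarVariation F T) :
    ∃ M, ∀ w, IsPartition 0 T w →
      gridSum (fun x x' y y' => |planarInc F x x' y y'|) 0 (w ++ [T]) 0 (w ++ [T]) ≤ M := by
  obtain ⟨M, hM⟩ := hbv
  refine ⟨M, fun w hw => ?_⟩
  rw [gridSum_eq_sum_get]
  exact hM _ (0 :: (w ++ [T])).get
    (List.sortedLE_iff_pairwise.2 hw.pairwise_cons_append).monotone_get rfl (by simp)

lemma BoundedPlanarVariation.bddAbove_posVarSums (hbv : BoundedPlanarVariation F T) {x y : ℝ}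
    (hx : x ≤ T) (hy : y ≤ T) : BddAbove (posVarSums F x y) := by
  obtain ⟨M, hM⟩ := hbv.exists_gridSum_abs_le
  refine ⟨M, ?_⟩
  rintro _ ⟨s, t, hs, ht, rfl⟩
  obtain ⟨w, hw, hsw, htw⟩ :=
    (hs.append_cons (.nil hx)).exists_common_refinement (ht.append_cons (.nil hy))
  calc gridSum (posPlanarInc F) 0 (s ++ [x]) 0 (t ++ [y])
      ≤ gridSum (posPlanarInc F) 0 (w ++ [T]) 0 (w ++ [T]) :=
        gridSum_posPlanarInc_mono F (hsw.trans (List.sublist_append_left w [T]))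
          (htw.trans (List.sublist_append_left w [T]))
    _ ≤ gridSum (fun x x' y y' => |planarInc F x x' y y'|) 0 (w ++ [T]) 0 (w ++ [T]) :=
        gridSum_le_gridSum _ _ _ _ fun _ _ _ _ => posPart_le_abs _
    _ ≤ M := hM w hw

lemma posPlanarVariation_zero_right {x : ℝ} (hx : 0 ≤ x) : posPlanarVariation F x 0 = 0 := by
  suffices posVarSums F x 0 = {0} by rw [posPlanarVariation, this, csSup_singleton]
  refine eq_singleton_iff_nonempty_unique_mem.2 ⟨posVarSums_nonempty hx le_rfl, ?_⟩
  rintro _ ⟨s, t, -, ht, rfl⟩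
  simp only [gridSum_eq_sum_get, posPlanarInc, ht.get_cons_append_eq]
  simp [planarInc]

lemma posPlanarVariation_zero_left {y : ℝ} (hy : 0 ≤ y) : posPlanarVariation F 0 y = 0 := by
  suffices posVarSums F 0 y = {0} by rw [posPlanarVariation, this, csSup_singleton]
  refine eq_singleton_iff_nonempty_unique_mem.2 ⟨posVarSums_nonempty le_rfl hy, ?_⟩
  rintro _ ⟨s, t, hs, -, rfl⟩
  simp only [gridSum_eq_sum_get, posPlanarInc, hs.get_cons_append_eq]
  simp [planarInc]

lemma exists_add_posPlanarInc_le_add {a₁ b₁ a₂ b₂ : ℝ} {s t u v : List ℝ}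
    (hs : IsPartition 0 a₁ s) (ht : IsPartition 0 b₂ t) (hu : IsPartition 0 b₁ u)
    (hv : IsPartition 0 a₂ v) (h1 : a₁ ≤ b₁) (h2 : a₂ ≤ b₂) :
    ∃ p ∈ posVarSums F b₁ b₂, ∃ q ∈ posVarSums F a₁ a₂,
      gridSum (posPlanarInc F) 0 (s ++ [a₁]) 0 (t ++ [b₂]) +
        gridSum (posPlanarInc F) 0 (u ++ [b₁]) 0 (v ++ [a₂]) + posPlanarInc F a₁ b₁ a₂ b₂ ≤
      p + q := by
  -- Split `t` at `a₂` and `u` at `a₁`, and refine `[0, a₂]` by a common `w`: the grid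
  -- `(s, a₁, u₂) × (w, a₂, t₂)` of `[0, b₁] × [0, b₂]` then dominates both sums and the cell.
  obtain ⟨t₁, t₂, ht₁, ht₂, htt⟩ := ht.exists_split hv.le h2
  obtain ⟨u₁, u₂, hu₁, hu₂, huu⟩ := hu.exists_split hs.le h1
  obtain ⟨w, hw, ht₁w, hvw⟩ := ht₁.exists_common_refinement hv
  set G := gridSum (posPlanarInc F)
  refine ⟨G 0 (s ++ a₁ :: u₂ ++ [b₁]) 0 (w ++ a₂ :: t₂ ++ [b₂]),
    ⟨_, _, hs.append_cons hu₂, hw.append_cons ht₂, rfl⟩,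
    G 0 (u₁ ++ [a₁]) 0 (w ++ [a₂]), ⟨_, _, hu₁, hw, rfl⟩, ?_⟩
  have hst : G 0 (s ++ [a₁]) 0 (t ++ [b₂]) ≤
      G 0 (s ++ [a₁]) 0 (w ++ [a₂]) + G 0 (s ++ [a₁]) a₂ (t₂ ++ [b₂]) := by
    rw [← gridSum_append_cons_right]
    refine gridSum_posPlanarInc_mono F (List.Sublist.refl _) ?_
    simpa using (htt.trans (ht₁w.append_right _)).append_right [b₂]
  have huv : G 0 (u ++ [b₁]) 0 (v ++ [a₂]) ≤
      G 0 (u₁ ++ [a₁]) 0 (w ++ [a₂]) + G a₁ (u₂ ++ [b₁]) 0 (w ++ [a₂]) := by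
    rw [← gridSum_append_cons_left]
    exact gridSum_posPlanarInc_mono F (by simpa using huu.append_right [b₁]) (hvw.append_right [a₂])
  have hinc : posPlanarInc F a₁ b₁ a₂ b₂ ≤ G a₁ (u₂ ++ [b₁]) a₂ (t₂ ++ [b₂]) := by
    simpa [G] using gridSum_posPlanarInc_mono F (List.sublist_append_right u₂ [b₁])
      (List.sublist_append_right t₂ [b₂])
  have hglue : G 0 (s ++ a₁ :: u₂ ++ [b₁]) 0 (w ++ a₂ :: t₂ ++ [b₂]) =
      G 0 (s ++ [a₁]) 0 (w ++ [a₂]) + G 0 (s ++ [a₁]) a₂ (t₂ ++ [b₂]) +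
        G a₁ (u₂ ++ [b₁]) 0 (w ++ [a₂]) + G a₁ (u₂ ++ [b₁]) a₂ (t₂ ++ [b₂]) := by
    simp only [G, List.append_assoc, List.cons_append]
    rw [gridSum_append_cons_left, gridSum_append_cons_right _ 0 _ _ a₂ w (t₂ ++ [b₂]),
      gridSum_append_cons_right _ a₁ _ _ a₂ w (t₂ ++ [b₂])]
    ring
  linarith

lemma BoundedPlanarVariation.posPlanarInc_le_planarInc_posPlanarVariation {T : ℝ}
    (hbv : BoundedPlanarVariation F T) {a₁ b₁ a₂ b₂ : ℝ} (h01 : 0 ≤ a₁) (h1 : a₁ ≤ b₁)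
    (hb1 : b₁ ≤ T) (h02 : 0 ≤ a₂) (h2 : a₂ ≤ b₂) (hb2 : b₂ ≤ T) :
    posPlanarInc F a₁ b₁ a₂ b₂ ≤ planarInc (fun p => posPlanarVariation F p.1 p.2) a₁ b₁ a₂ b₂ := by
  set R := posPlanarVariation F b₁ b₂ + posPlanarVariation F a₁ a₂
  have key : ∀ p ∈ posVarSums F a₁ b₂, ∀ q ∈ posVarSums F b₁ a₂,
      p + q + posPlanarInc F a₁ b₁ a₂ b₂ ≤ R := by
    rintro _ ⟨s, t, hs, ht, rfl⟩ _ ⟨u, v, hu, hv, rfl⟩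
    obtain ⟨p, hp, q, hq, hle⟩ := exists_add_posPlanarInc_le_add (F := F) hs ht hu hv h1 h2
    exact hle.trans (add_le_add (le_csSup (hbv.bddAbove_posVarSums hb1 hb2) hp)
      (le_csSup (hbv.bddAbove_posVarSums (h1.trans hb1) (h2.trans hb2)) hq))
  have hq : ∀ p ∈ posVarSums F a₁ b₂,
      posPlanarVariation F b₁ a₂ ≤ R - posPlanarInc F a₁ b₁ a₂ b₂ - p := fun p hp =>
    csSup_le (posVarSums_nonempty (h01.trans h1) h02) fun q hq => by linarith [key p hp q hq]
  have hp : posPlanarVariation F a₁ b₂ ≤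
      R - posPlanarInc F a₁ b₁ a₂ b₂ - posPlanarVariation F b₁ a₂ :=
    csSup_le (posVarSums_nonempty h01 (h02.trans h2)) fun p hp => by linarith [hq p hp]
  simp only [planarInc]
  linarith

end PlanarVariation

theorem stmt_0_general (T : ℝ) (F : ℝ × ℝ → ℝ)
    (hax : VanishesOnAxes F) (hbv : BoundedPlanarVariation F T) :
    ∃ Fp Fm : ℝ × ℝ → ℝ,
      (∀ p : ℝ × ℝ, p.1 ∈ Icc 0 T → p.2 ∈ Icc 0 T → F p = Fp p - Fm p) ∧
      PlanarlyIncreasingOn Fp T ∧ PlanarlyIncreasingOn Fm T ∧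
      VanishesOnAxes Fp ∧ VanishesOnAxes Fm := by
  refine ⟨fun p => posPlanarVariation F p.1 p.2, fun p => posPlanarVariation F p.1 p.2 - F p,
    fun p _ _ => (sub_sub_cancel _ _).symm, fun a₁ b₁ a₂ b₂ h01 h1 hb1 h02 h2 hb2 => ?_,
    fun a₁ b₁ a₂ b₂ h01 h1 hb1 h02 h2 hb2 => ?_, fun a ha => ?_, fun a ha => ?_⟩
  · exact (posPart_nonneg _).trans
      (hbv.posPlanarInc_le_planarInc_posPlanarVariation h01 h1 hb1 h02 h2 hb2)
  · rw [planarInc_sub, sub_nonneg]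
    exact (le_posPart _).trans
      (hbv.posPlanarInc_le_planarInc_posPlanarVariation h01 h1 hb1 h02 h2 hb2)
  · exact ⟨posPlanarVariation_zero_right ha, posPlanarVariation_zero_left ha⟩
  · simp [posPlanarVariation_zero_right ha, posPlanarVariation_zero_left ha, hax a ha]

theorem stmt_0 (T : ℝ) (hT : 0 < T) (F : ℝ × ℝ → ℝ)
    (hax : VanishesOnAxes F) (hbv : BoundedPlanarVariation F T) :
    ∃ Fp Fm : ℝ × ℝ → ℝ,
      (∀ p : ℝ × ℝ, p.1 ∈ Icc 0 T → p.2 ∈ Icc 0 T → F p = Fp p - Fm p) ∧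
      PlanarlyIncreasingOn Fp T ∧ PlanarlyIncreasingOn Fm T ∧
      VanishesOnAxes Fp ∧ VanishesOnAxes Fm :=
  stmt_0_general T F hax hbv
end
end

section
/- Let X be an L²-continuous, square integrable, zero-mean process on [0,T] with covariance measure μ. Then for every t ∈ [0,T], the regularized energy E(C_ε(X,X,t)) = (1/ε)∫₀ᵗ E(X_{s+ε} − X_s)² ds converges as ε → 0 to μ(D_t), where D_t = {(s,s) : s ∈ [0,t]} is the diagonal of [0,t]². -/
/-!
By the covariance identity, `E(X_{s+ε} - X_s)² = μ((s, s + ε]²)`. Splitting `μ` into its Jordan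
parts and applying Fubini to `{(s, x, y) | x, y ∈ (s, s + ε]}`, the regularized energy becomes
`∫ ε⁻¹ λ([x - ε, x) ∩ [y - ε, y) ∩ (0, t]) dμ(x, y)`. The integrand is bounded by `1` and tends to
the indicator of the diagonal over `(0, t]`, so dominated convergence gives `μ(D_t \ {(0, 0)})`.
The atom at `(0, 0)` is null because `μ((-r, 0]²) = E(X_0 - X_{-r})² → 0` by `L²`-continuity.
-/

open Set MeasureTheory Filter
open scoped Topology

noncomputable section

def incrementSquares (ε : ℝ) : Set (ℝ × (ℝ × ℝ)) :=
  {z | z.2.1 ∈ Ioc z.1 (z.1 + ε) ∧ z.2.2 ∈ Ioc z.1 (z.1 + ε)}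

lemma measurableSet_incrementSquares (ε : ℝ) : MeasurableSet (incrementSquares ε) := by
  unfold incrementSquares
  simp only [mem_Ioc, ofPred_and]
  measurability

lemma prodMk_preimage_incrementSquares (s ε : ℝ) :
    Prod.mk s ⁻¹' incrementSquares ε = Ioc s (s + ε) ×ˢ Ioc s (s + ε) :=
  rfl

lemma preimage_incrementSquares_swap (p : ℝ × ℝ) (ε : ℝ) :
    (fun s => (s, p)) ⁻¹' incrementSquares ε = Ico (p.1 - ε) p.1 ∩ Ico (p.2 - ε) p.2 := by
  ext s
  simp only [incrementSquares, mem_preimage, mem_ofPred_eq, mem_Ioc, mem_inter_iff, mem_Ico]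
  constructor <;> rintro ⟨⟨h₁, h₂⟩, h₃, h₄⟩ <;> refine ⟨⟨?_, ?_⟩, ?_, ?_⟩ <;> linarith

lemma measurableSet_setOf_fst_eq_snd_and_fst_mem {s : Set ℝ} (hs : MeasurableSet s) :
    MeasurableSet {p : ℝ × ℝ | p.1 = p.2 ∧ p.1 ∈ s} :=
  (measurableSet_eq_fun measurable_fst measurable_snd).inter (measurable_fst hs)

lemma measurable_measureReal_Ioc_prod_Ioc (ν : Measure (ℝ × ℝ)) [SFinite ν] (ε : ℝ) :
    Measurable fun s => ν.real (Ioc s (s + ε) ×ˢ Ioc s (s + ε)) := by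
  simp_rw [← prodMk_preimage_incrementSquares]
  exact (measurable_measure_prodMk_left (measurableSet_incrementSquares ε)).ennreal_toReal

lemma integrable_measureReal_Ioc_prod_Ioc (ν : Measure (ℝ × ℝ)) [IsFiniteMeasure ν] (a b ε : ℝ) :
    Integrable (fun s => ν.real (Ioc s (s + ε) ×ˢ Ioc s (s + ε))) (volume.restrict (Ioc a b)) :=
  .of_bound (measurable_measureReal_Ioc_prod_Ioc ν ε).aestronglyMeasurable (ν.real univ)
    (ae_of_all _ fun _ => by
      rw [Real.norm_of_nonneg measureReal_nonneg]
      exact measureReal_mono (subset_univ _))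

lemma integral_measureReal_Ioc_prod_Ioc (ν : Measure (ℝ × ℝ)) [IsFiniteMeasure ν] (a b ε : ℝ) :
    ∫ s in Ioc a b, ν.real (Ioc s (s + ε) ×ˢ Ioc s (s + ε)) =
      ∫ p, (volume.restrict (Ioc a b)).real (Ico (p.1 - ε) p.1 ∩ Ico (p.2 - ε) p.2) ∂ν := by
  have hS := measurableSet_incrementSquares ε
  simp_rw [measureReal_def, ← prodMk_preimage_incrementSquares, ← preimage_incrementSquares_swap]
  rw [integral_toReal (measurable_measure_prodMk_left hS).aemeasurable
      (ae_of_all _ fun _ => measure_lt_top _ _),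
    integral_toReal (measurable_measure_prodMk_right hS).aemeasurable
      (ae_of_all _ fun _ => measure_lt_top _ _),
    ← Measure.prod_apply hS, ← Measure.prod_apply_symm hS]

lemma tendsto_inv_mul_volume_Ico_inter_Ioc (a b x : ℝ) :
    Tendsto (fun ε => (1 / ε) * volume.real (Ico (x - ε) x ∩ Ioc a b)) (𝓝[>] 0)
      (𝓝 ((Ioc a b).indicator 1 x)) := by
  by_cases hx : x ∈ Ioc a b
  · rw [indicator_of_mem hx, Pi.one_apply]
    refine tendsto_const_nhds.congr' ?_
    filter_upwards [Ioo_mem_nhdsGT (sub_pos.2 hx.1)] with ε hε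
    obtain ⟨hε, hεx⟩ := hε
    have hsub : Ico (x - ε) x ⊆ Ioc a b := fun s hs => ⟨by linarith [hs.1], hs.2.le.trans hx.2⟩
    rw [inter_eq_left.2 hsub, Real.volume_real_Ico_of_le (by linarith), sub_sub_cancel,
      one_div_mul_cancel hε.ne']
  · rw [indicator_of_notMem hx]
    refine tendsto_const_nhds.congr' ?_
    have hempty : ∀ᶠ ε in 𝓝[>] (0 : ℝ), Ico (x - ε) x ∩ Ioc a b = ∅ := by
      rcases le_or_gt x a with hxa | hax
      · exact Eventually.of_forall fun ε =>
          eq_empty_of_forall_notMem fun s hs => by linarith [hs.1.2, hs.2.1]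
      · have hbx : b < x := lt_of_not_ge fun hxb => hx ⟨hax, hxb⟩
        filter_upwards [Ioo_mem_nhdsGT (sub_pos.2 hbx)] with ε hε
        exact eq_empty_of_forall_notMem fun s hs => by linarith [hs.1.1, hs.2.2, hε.2]
    filter_upwards [hempty] with ε hε
    rw [hε, measureReal_empty, mul_zero]

lemma tendsto_inv_mul_volume_Ico_inter_Ico (a b x y : ℝ) :
    Tendsto (fun ε => (1 / ε) * (volume.restrict (Ioc a b)).real (Ico (x - ε) x ∩ Ico (y - ε) y))
      (𝓝[>] 0) (𝓝 ({p : ℝ × ℝ | p.1 = p.2 ∧ p.1 ∈ Ioc a b}.indicator 1 (x, y))) := by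
  rcases eq_or_ne x y with rfl | hxy
  · simp_rw [inter_self, measureReal_restrict_apply measurableSet_Ico]
    convert tendsto_inv_mul_volume_Ico_inter_Ioc a b x using 2
    simp [indicator_apply]
  · rw [indicator_of_notMem fun h => hxy h.1]
    refine tendsto_const_nhds.congr' ?_
    filter_upwards [Ioo_mem_nhdsGT (abs_pos.2 (sub_ne_zero.2 hxy))] with ε hε
    have hempty : Ico (x - ε) x ∩ Ico (y - ε) y = ∅ :=
      eq_empty_of_forall_notMem fun s ⟨⟨h₁, h₂⟩, h₃, h₄⟩ =>
        lt_asymm hε.2 (abs_sub_lt_iff.2 ⟨by linarith, by linarith⟩)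
    rw [hempty, measureReal_empty, mul_zero]

lemma tendsto_inv_mul_integral_measureReal_Ioc_prod_Ioc (ν : Measure (ℝ × ℝ)) [IsFiniteMeasure ν]
    (a b : ℝ) :
    Tendsto (fun ε => (1 / ε) * ∫ s in Ioc a b, ν.real (Ioc s (s + ε) ×ˢ Ioc s (s + ε)))
      (𝓝[>] 0) (𝓝 (ν.real {p : ℝ × ℝ | p.1 = p.2 ∧ p.1 ∈ Ioc a b})) := by
  simp_rw [integral_measureReal_Ioc_prod_Ioc, ← integral_const_mul]
  rw [← integral_indicator_one (measurableSet_setOf_fst_eq_snd_and_fst_mem measurableSet_Ioc)]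
  refine tendsto_integral_filter_of_dominated_convergence 1 ?_ ?_ (integrable_const 1)
    (ae_of_all _ fun p => tendsto_inv_mul_volume_Ico_inter_Ico a b p.1 p.2)
  · refine Eventually.of_forall fun ε => (Measurable.const_mul ?_ _).aestronglyMeasurable
    simp_rw [← preimage_incrementSquares_swap]
    exact (measurable_measure_prodMk_right (measurableSet_incrementSquares ε)).ennreal_toReal
  · filter_upwards [self_mem_nhdsWithin] with ε (hε : 0 < ε)
    refine ae_of_all _ fun p => ?_
    have hle : (volume.restrict (Ioc a b)).real (Ico (p.1 - ε) p.1 ∩ Ico (p.2 - ε) p.2) ≤ ε := by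
      rw [measureReal_restrict_apply (measurableSet_Ico.inter measurableSet_Ico)]
      calc _ ≤ volume.real (Ico (p.1 - ε) p.1) :=
            measureReal_mono (fun s hs => hs.1.1) measure_Ico_lt_top.ne
        _ = ε := by rw [Real.volume_real_Ico_of_le (by linarith), sub_sub_cancel]
    rw [Real.norm_of_nonneg (by positivity), Pi.one_apply, one_div, inv_mul_le_one₀ hε]
    exact hle

namespace MeasureTheory.SignedMeasure

lemma tendsto_measure_biInter_gt {α ι : Type*} [MeasurableSpace α] [LinearOrder ι] [NoMaxOrder ι]
    [TopologicalSpace ι] [OrderTopology ι] [FirstCountableTopology ι] (μ : SignedMeasure α)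
    {s : ι → Set α} {a : ι} (hs : ∀ r > a, MeasurableSet (s r))
    (hm : ∀ i j, a < i → i ≤ j → s i ⊆ s j) (hI : MeasurableSet (⋂ r > a, s r)) :
    Tendsto (μ ∘ s) (𝓝[>] a) (𝓝 (μ (⋂ r > a, s r))) := by
  obtain ⟨r₀, hr₀⟩ := exists_gt a
  have hpart (ν : Measure α) [IsFiniteMeasure ν] :
      Tendsto (ν.real ∘ s) (𝓝[>] a) (𝓝 (ν.real (⋂ r > a, s r))) :=
    (ENNReal.tendsto_toReal (measure_ne_top _ _)).comp <| MeasureTheory.tendsto_measure_biInter_gt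
      (fun r hr => (hs r hr).nullMeasurableSet) hm ⟨r₀, hr₀, measure_ne_top _ _⟩
  rw [μ.apply_eq_posPart_real_sub_negPart_real hI]
  refine ((hpart _).sub (hpart _)).congr' ?_
  filter_upwards [self_mem_nhdsWithin] with r hr
  exact (μ.apply_eq_posPart_real_sub_negPart_real (hs r hr)).symm

lemma tendsto_apply_Ioc_prod_Ioc_nhdsGT (μ : SignedMeasure (ℝ × ℝ)) (x : ℝ) :
    Tendsto (fun r => μ (Ioc (x - r) x ×ˢ Ioc (x - r) x)) (𝓝[>] 0) (𝓝 (μ {(x, x)})) := by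
  have hI : ⋂ r > (0 : ℝ), Ioc (x - r) x ×ˢ Ioc (x - r) x = {(x, x)} := by
    ext ⟨y, z⟩
    simp only [mem_iInter, mem_prod, mem_Ioc, mem_singleton_iff, Prod.mk.injEq]
    constructor
    · intro h
      have hy : x ≤ y := le_of_forall_pos_lt_add fun r hr => by linarith [(h r hr).1.1]
      have hz : x ≤ z := le_of_forall_pos_lt_add fun r hr => by linarith [(h r hr).2.1]
      exact ⟨le_antisymm (h 1 one_pos).1.2 hy, le_antisymm (h 1 one_pos).2.2 hz⟩
    · rintro ⟨rfl, rfl⟩ r hr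
      exact ⟨⟨by linarith, le_rfl⟩, by linarith, le_rfl⟩
  have hmono : ∀ i j : ℝ, 0 < i → i ≤ j →
      Ioc (x - i) x ×ˢ Ioc (x - i) x ⊆ Ioc (x - j) x ×ˢ Ioc (x - j) x := fun i j _ hij =>
    prod_mono (Ioc_subset_Ioc (by linarith) le_rfl) (Ioc_subset_Ioc (by linarith) le_rfl)
  have := μ.tendsto_measure_biInter_gt (fun r _ => measurableSet_Ioc.prod measurableSet_Ioc) hmono
    (hI ▸ measurableSet_singleton _)
  rwa [hI] at this

lemma apply_setOf_fst_eq_snd_and_fst_mem_Icc (μ : SignedMeasure (ℝ × ℝ)) {a b : ℝ}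
    (ha : μ {(a, a)} = 0) :
    μ {p : ℝ × ℝ | p.1 = p.2 ∧ p.1 ∈ Icc a b} = μ {p : ℝ × ℝ | p.1 = p.2 ∧ p.1 ∈ Ioc a b} := by
  have hsub : {p : ℝ × ℝ | p.1 = p.2 ∧ p.1 ∈ Ioc a b} ⊆ {p | p.1 = p.2 ∧ p.1 ∈ Icc a b} :=
    fun p hp => ⟨hp.1, Ioc_subset_Icc_self hp.2⟩
  have hdiff : {p : ℝ × ℝ | p.1 = p.2 ∧ p.1 ∈ Icc a b} \ {p | p.1 = p.2 ∧ p.1 ∈ Ioc a b} ⊆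
      {(a, a)} := by
    rintro ⟨x, y⟩ ⟨⟨hxy, hx⟩, hnot⟩
    obtain rfl : x = y := hxy
    obtain rfl : x = a := by
      by_contra h
      exact hnot ⟨rfl, lt_of_le_of_ne hx.1 (Ne.symm h), hx.2⟩
    rfl
  rw [← μ.of_add_of_sdiff (measurableSet_setOf_fst_eq_snd_and_fst_mem measurableSet_Ioc)
    (measurableSet_setOf_fst_eq_snd_and_fst_mem measurableSet_Icc) hsub]
  rcases subset_singleton_iff_eq.1 hdiff with h | h <;> rw [h] <;> simp [ha]

lemma tendsto_inv_mul_integral_apply_Ioc_prod_Ioc (μ : SignedMeasure (ℝ × ℝ)) (a b : ℝ) :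
    Tendsto (fun ε => (1 / ε) * ∫ s in Ioc a b, μ (Ioc s (s + ε) ×ˢ Ioc s (s + ε)))
      (𝓝[>] 0) (𝓝 (μ {p : ℝ × ℝ | p.1 = p.2 ∧ p.1 ∈ Ioc a b})) := by
  rw [μ.apply_eq_posPart_real_sub_negPart_real
    (measurableSet_setOf_fst_eq_snd_and_fst_mem measurableSet_Ioc)]
  refine ((tendsto_inv_mul_integral_measureReal_Ioc_prod_Ioc _ a b).sub
    (tendsto_inv_mul_integral_measureReal_Ioc_prod_Ioc _ a b)).congr fun ε => ?_
  simp_rw [μ.apply_eq_posPart_real_sub_negPart_real (measurableSet_Ioc.prod measurableSet_Ioc)]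
  rw [integral_sub (integrable_measureReal_Ioc_prod_Ioc _ a b ε)
    (integrable_measureReal_Ioc_prod_Ioc _ a b ε), mul_sub]

end MeasureTheory.SignedMeasure

lemma integral_sub_sq_eq {Ω : Type*} [MeasurableSpace Ω] {P : Measure Ω} {f g : Ω → ℝ}
    (hff : Integrable (fun ω => f ω * f ω) P) (hgg : Integrable (fun ω => g ω * g ω) P)
    (hgf : Integrable (fun ω => g ω * f ω) P) (hfg : Integrable (fun ω => f ω * g ω) P) :
    ∫ ω, (f ω - g ω) ^ 2 ∂P =
      (∫ ω, f ω * f ω ∂P) + (∫ ω, g ω * g ω ∂P) - (∫ ω, g ω * f ω ∂P) - ∫ ω, f ω * g ω ∂P := by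
  calc ∫ ω, (f ω - g ω) ^ 2 ∂P = ∫ ω, (f ω * f ω - f ω * g ω) - (g ω * f ω - g ω * g ω) ∂P :=
        integral_congr_ae (ae_of_all _ fun ω => by ring)
    _ = _ := by
        have hf : Integrable (fun ω => f ω * f ω - f ω * g ω) P := hff.sub hfg
        have hg : Integrable (fun ω => g ω * f ω - g ω * g ω) P := hgf.sub hgg
        rw [integral_sub hf hg, integral_sub hff hfg, integral_sub hgf hgg]
        ring

theorem stmt_3_general {Ω : Type*} [MeasureSpace Ω]
    (X : ℝ → Ω → ℝ)
    (hint : ∀ s t : ℝ, Integrable (fun ω => X s ω * X t ω))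
    (hL2cont : ∀ t : ℝ, Tendsto (fun s => ∫ ω, (X s ω - X t ω) ^ 2) (𝓝 t) (𝓝 0))
    (μ : SignedMeasure (ℝ × ℝ))
    (hμ : ∀ a₁ b₁ a₂ b₂ : ℝ, a₁ ≤ b₁ → a₂ ≤ b₂ →
      μ (Ioc a₁ b₁ ×ˢ Ioc a₂ b₂) =
        (∫ ω, X b₁ ω * X b₂ ω) + (∫ ω, X a₁ ω * X a₂ ω)
          - (∫ ω, X a₁ ω * X b₂ ω) - (∫ ω, X b₁ ω * X a₂ ω))
    (t : ℝ) :
    Tendsto (fun ε : ℝ => (1 / ε) * ∫ s in Ioc (0 : ℝ) t, ∫ ω, (X (s + ε) ω - X s ω) ^ 2)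
      (𝓝[>] 0) (𝓝 (μ {p : ℝ × ℝ | p.1 = p.2 ∧ p.1 ∈ Icc 0 t})) := by
  have hsq : ∀ a b, a ≤ b → μ (Ioc a b ×ˢ Ioc a b) = ∫ ω, (X b ω - X a ω) ^ 2 := fun a b hab => by
    rw [hμ a b a b hab hab, integral_sub_sq_eq (hint b b) (hint a a) (hint a b) (hint b a)]
  have hatom : μ {((0 : ℝ), (0 : ℝ))} = 0 := by
    refine tendsto_nhds_unique (μ.tendsto_apply_Ioc_prod_Ioc_nhdsGT 0) ?_
    have hleft : Tendsto (fun r : ℝ => 0 - r) (𝓝[>] 0) (𝓝 0) :=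
      tendsto_nhdsWithin_of_tendsto_nhds ((continuous_sub_left 0).tendsto' 0 0 (sub_zero 0))
    refine ((hL2cont 0).comp hleft).congr' ?_
    filter_upwards [self_mem_nhdsWithin] with r (hr : 0 < r)
    rw [Function.comp_apply, hsq _ _ (by linarith)]
    exact integral_congr_ae (ae_of_all _ fun ω => sub_sq_comm _ _)
  rw [μ.apply_setOf_fst_eq_snd_and_fst_mem_Icc hatom]
  refine (μ.tendsto_inv_mul_integral_apply_Ioc_prod_Ioc 0 t).congr' ?_
  filter_upwards [self_mem_nhdsWithin] with ε (hε : 0 < ε)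
  simp_rw [hsq _ _ (le_add_of_nonneg_right hε.le)]

theorem stmt_3 {Ω : Type*} [MeasureSpace Ω] [IsProbabilityMeasure (volume : Measure Ω)]
    (T : ℝ) (hT : 0 < T) (X : ℝ → Ω → ℝ)
    (hmeas : ∀ t : ℝ, Measurable (X t))
    (hint : ∀ s t : ℝ, Integrable (fun ω => X s ω * X t ω))
    (hmean : ∀ t : ℝ, ∫ ω, X t ω = 0)
    (hL2cont : ∀ t : ℝ, Tendsto (fun s => ∫ ω, (X s ω - X t ω) ^ 2) (𝓝 t) (𝓝 0))
    (μ : SignedMeasure (ℝ × ℝ))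
    (hμ : ∀ a₁ b₁ a₂ b₂ : ℝ, a₁ ≤ b₁ → a₂ ≤ b₂ →
      μ (Ioc a₁ b₁ ×ˢ Ioc a₂ b₂) =
        (∫ ω, X b₁ ω * X b₂ ω) + (∫ ω, X a₁ ω * X a₂ ω)
          - (∫ ω, X a₁ ω * X b₂ ω) - (∫ ω, X b₁ ω * X a₂ ω))
    (t : ℝ) (ht : t ∈ Icc 0 T) :
    Tendsto (fun ε : ℝ => (1 / ε) * ∫ s in Ioc (0 : ℝ) t, ∫ ω, (X (s + ε) ω - X s ω) ^ 2)
      (𝓝[>] 0) (𝓝 (μ {p : ℝ × ℝ | p.1 = p.2 ∧ p.1 ∈ Icc 0 t})) :=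
  stmt_3_general X hint hL2cont μ hμ t
end
end

section
/- Let X be a zero-mean Gaussian process on [0,T] with covariance measure μ. For f ∈ L_μ, E(∫₀ᵀ f dX)² = ∫₀ᵀ f²(s) dμ_D(s) + 2∫_{[0,T]²} 1_{(s₁>s₂)} f(s₁)f(s₂) dμ(s₁,s₂), where μ_D is the measure on [0,T] defined by μ_D([0,t]) = μ(D_t) with D_t = {(s,s): s ≤ t}, and the first term equals ∫₀ᵗ f²(s) d[X]_s since [X]_t = μ(D_t). -/
/-!
Symmetry of `μ` makes both parts of its Jordan decomposition invariant under the swap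
`(s₁, s₂) ↦ (s₂, s₁)`, so for each part the integral of `f(s₁) f(s₂)` over the upper triangle
equals the one over the lower triangle, and the integral over the square is the diagonal integral
plus twice the upper one. A finite signed measure on `[0, T]` is determined by its values on the
intervals `[0, t]`, so `μ_D` is the pull-back of `μ` along `s ↦ (s, s)`; the Jordan decomposition
of that pull-back is the pull-back of the Jordan decomposition of `μ`, which turns the integral
against `μ_D` into the diagonal integral against `μ`.
-/

open Set MeasureTheory

noncomputable section

/-- Integral of `f` with respect to a finite signed measure, via the Jordan decomposition. -/
def sintegral {α : Type*} [MeasurableSpace α] (μ : SignedMeasure α) (f : α → ℝ) : ℝ :=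
  (∫ x, f x ∂μ.toJordanDecomposition.posPart) - ∫ x, f x ∂μ.toJordanDecomposition.negPart

namespace MeasureTheory

namespace JordanDecomposition

variable {α β : Type*} [MeasurableSpace α] [MeasurableSpace β] {e : β → α}

def comap (j : JordanDecomposition α) (he : MeasurableEmbedding e) :
    JordanDecomposition β where
  posPart := j.posPart.comap e
  negPart := j.negPart.comap e
  mutuallySingular := by
    obtain ⟨S, hS, hpos, hneg⟩ := j.mutuallySingular
    refine ⟨e ⁻¹' S, hS.preimage he.measurable, ?_, ?_⟩
    · rw [he.comap_apply]
      exact measure_mono_null (image_preimage_subset e S) hpos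
    · rw [he.comap_apply, ← preimage_compl]
      exact measure_mono_null (image_preimage_subset e _) hneg

@[simp]
theorem comap_posPart (j : JordanDecomposition α) (he : MeasurableEmbedding e) :
    (j.comap he).posPart = j.posPart.comap e :=
  rfl

@[simp]
theorem comap_negPart (j : JordanDecomposition α) (he : MeasurableEmbedding e) :
    (j.comap he).negPart = j.negPart.comap e :=
  rfl

theorem toSignedMeasure_comap_apply (j : JordanDecomposition α) (he : MeasurableEmbedding e)
    {B : Set β} (hB : MeasurableSet B) :
    (j.comap he).toSignedMeasure B = j.toSignedMeasure (e '' B) := by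
  simp only [toSignedMeasure, sub_apply, Measure.toSignedMeasure_apply_measurable hB,
    Measure.toSignedMeasure_apply_measurable (he.measurableSet_image.2 hB), comap_posPart,
    comap_negPart, measureReal_def, he.comap_apply]

end JordanDecomposition

namespace SignedMeasure

variable {α β : Type*} [MeasurableSpace α] [MeasurableSpace β]

theorem totalVariation_toSignedMeasure_comap_apply (s : SignedMeasure α) {e : β → α}
    (he : MeasurableEmbedding e) (B : Set β) :
    (s.toJordanDecomposition.comap he).toSignedMeasure.totalVariation B =
      s.totalVariation (e '' B) := by
  simp only [totalVariation, JordanDecomposition.toJordanDecomposition_toSignedMeasure,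
    Measure.add_apply, JordanDecomposition.comap_posPart, JordanDecomposition.comap_negPart,
    he.comap_apply]

theorem map_symm_toJordanDecomposition_eq_self (s : SignedMeasure α) (φ : α ≃ᵐ α)
    (h : ∀ A, MeasurableSet A → s (φ '' A) = s A) :
    s.toJordanDecomposition.posPart.map φ.symm = s.toJordanDecomposition.posPart ∧
      s.toJordanDecomposition.negPart.map φ.symm = s.toJordanDecomposition.negPart := by
  have hcomap : s.toJordanDecomposition.comap φ.measurableEmbedding = s.toJordanDecomposition := by
    refine (toJordanDecomposition_eq <| VectorMeasure.ext fun A hA => ?_).symm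
    rw [JordanDecomposition.toSignedMeasure_comap_apply _ _ hA,
      toSignedMeasure_toJordanDecomposition, h A hA]
  exact ⟨φ.map_symm.trans (congrArg JordanDecomposition.posPart hcomap),
    φ.map_symm.trans (congrArg JordanDecomposition.negPart hcomap)⟩

theorem apply_inter_eq_of_totalVariation_compl_eq_zero (s : SignedMeasure α) {S A : Set α}
    (hS : MeasurableSet S) (hA : MeasurableSet A) (h : s.totalVariation Sᶜ = 0) :
    s (A ∩ S) = s A := by
  have hdiff : s (A \ S) = 0 :=
    s.null_of_totalVariation_zero (measure_mono_null (fun _ hx => hx.2) h)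
  rw [← inter_union_sdiff A S, VectorMeasure.of_union disjoint_sdiff_inter.symm (hA.inter hS)
    (hA.diff hS), hdiff, add_zero, inter_union_sdiff]

section Order

variable [TopologicalSpace α] [SecondCountableTopology α] [LinearOrder α] [OrderTopology α]
  [BorelSpace α]

theorem ext_of_Iic {s t : SignedMeasure α} (h : ∀ a, s (Iic a) = t (Iic a)) : s = t := by
  set js := s.toJordanDecomposition
  set jt := t.toJordanDecomposition
  have hreal : ∀ A, MeasurableSet A → (s A = t A ↔
      (js.posPart + jt.negPart).real A = (jt.posPart + js.negPart).real A) := by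
    intro A hA
    rw [s.apply_eq_posPart_real_sub_negPart_real hA, t.apply_eq_posPart_real_sub_negPart_real hA,
      measureReal_add_apply, measureReal_add_apply]
    constructor <;> intro heq <;> linarith
  have hparts : js.posPart + jt.negPart = jt.posPart + js.negPart := by
    refine Measure.ext_of_Iic _ _ fun a => ?_
    rw [← measureReal_eq_measureReal_iff]
    exact (hreal _ measurableSet_Iic).1 (h a)
  exact VectorMeasure.ext fun A hA => (hreal A hA).2 (by rw [hparts])

theorem ext_of_Icc {s t : SignedMeasure α} {a b : α} (hs : s.totalVariation (Icc a b)ᶜ = 0)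
    (ht : t.totalVariation (Icc a b)ᶜ = 0) (h : ∀ x ∈ Icc a b, s (Icc a x) = t (Icc a x)) :
    s = t := by
  refine ext_of_Iic fun x => ?_
  rw [← s.apply_inter_eq_of_totalVariation_compl_eq_zero measurableSet_Icc measurableSet_Iic hs,
    ← t.apply_inter_eq_of_totalVariation_compl_eq_zero measurableSet_Icc measurableSet_Iic ht]
  have hIcc : Iic x ∩ Icc a b = Icc a (min b x) := by
    ext y
    simp only [mem_inter_iff, mem_Iic, mem_Icc, le_min_iff]
    tauto
  rw [hIcc]
  by_cases hax : a ≤ min b x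
  · exact h _ ⟨hax, min_le_left _ _⟩
  · simp [Icc_eq_empty hax]

end Order

end SignedMeasure

theorem measurableEmbedding_diag {α : Type*} [MeasurableSpace α] [MeasurableEq α] :
    MeasurableEmbedding (Function.diag : α → α × α) :=
  .of_measurable_inverse (measurable_id.prodMk measurable_id)
    (range_diag ▸ measurableSet_diagonal) measurable_fst fun _ => rfl

theorem integral_comap_diag {α E : Type*} [MeasurableSpace α] [MeasurableEq α]
    [NormedAddCommGroup E] [NormedSpace ℝ E] (m : Measure (α × α)) (g : α × α → E) :
    ∫ x, g (Function.diag x) ∂m.comap Function.diag = ∫ p in diagonal α, g p ∂m := by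
  rw [← measurableEmbedding_diag.integral_map, measurableEmbedding_diag.map_comap, range_diag]

theorem SignedMeasure.toJordanDecomposition_eq_comap_diag {α : Type*} [TopologicalSpace α]
    [SecondCountableTopology α] [LinearOrder α] [OrderTopology α] [MeasurableSpace α]
    [BorelSpace α] [MeasurableEq α] {μ : SignedMeasure (α × α)} {ν : SignedMeasure α} {a b : α}
    (hμ : μ.totalVariation (Icc a b ×ˢ Icc a b)ᶜ = 0) (hν : ν.totalVariation (Icc a b)ᶜ = 0)
    (h : ∀ t ∈ Icc a b, ν (Icc a t) = μ {p | p.1 = p.2 ∧ p.1 ∈ Icc a t}) :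
    ν.toJordanDecomposition = μ.toJordanDecomposition.comap measurableEmbedding_diag := by
  refine toJordanDecomposition_eq (ext_of_Icc hν ?_ fun t ht => ?_)
  · rw [totalVariation_toSignedMeasure_comap_apply]
    exact measure_mono_null (by rintro _ ⟨s, hs, rfl⟩ ⟨hs', -⟩; exact hs hs') hμ
  · rw [h t ht, JordanDecomposition.toSignedMeasure_comap_apply _ _ measurableSet_Icc,
      toSignedMeasure_toJordanDecomposition]
    congr 1
    ext ⟨x, y⟩
    simp only [mem_ofPred_eq, mem_image, Function.diag_apply, Prod.mk.injEq]
    constructor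
    · rintro ⟨rfl, hx⟩
      exact ⟨x, hx, rfl, rfl⟩
    · rintro ⟨s, hs, rfl, rfl⟩
      exact ⟨rfl, hs⟩

section Order

variable {α : Type*} [LinearOrder α] [TopologicalSpace α] [OrderClosedTopology α]
  [SecondCountableTopology α] [MeasurableSpace α] [OpensMeasurableSpace α]

theorem integral_eq_setIntegral_diagonal_add_two_mul {m : Measure (α × α)}
    (hm : m.map Prod.swap = m) {g : α × α → ℝ} (hg : Integrable g m)
    (hg_swap : ∀ p, g p.swap = g p) :
    ∫ p, g p ∂m = ∫ p in diagonal α, g p ∂m + 2 * ∫ p in {p | p.2 < p.1}, g p ∂m := by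
  have hL : MeasurableSet {p : α × α | p.1 < p.2} := measurableSet_lt measurable_fst measurable_snd
  have hlower : ∫ p in {p | p.1 < p.2}, g p ∂m = ∫ p in {p | p.2 < p.1}, g p ∂m := by
    simpa only [hg_swap, preimage_ofPred_eq, Prod.fst_swap, Prod.snd_swap] using
      (MeasurePreserving.mk measurable_swap hm).setIntegral_preimage_emb
        MeasurableEquiv.prodComm.measurableEmbedding g {p : α × α | p.2 < p.1}
  have hcompl : (diagonal α)ᶜ = {p | p.2 < p.1} ∪ {p | p.1 < p.2} := by
    ext p
    simp only [mem_compl_iff, mem_diagonal_iff, mem_union, mem_ofPred_eq]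
    exact ⟨fun h => (lt_or_gt_of_ne h).symm, fun h => h.elim ne_of_gt ne_of_lt⟩
  have hdisj : Disjoint {p : α × α | p.2 < p.1} {p | p.1 < p.2} :=
    disjoint_left.2 fun _ hU hL => lt_asymm hU hL
  rw [← integral_add_compl isClosed_diagonal.measurableSet hg, hcompl,
    setIntegral_union hdisj hL hg.integrableOn hg.integrableOn, hlower]
  ring

theorem integral_mul_eq_integral_comap_diag_add_two_mul [MeasurableEq α] {m : Measure (α × α)}
    (hm : m.map Prod.swap = m) {f : α → ℝ} (hf : Measurable f)
    (hfm : Integrable (fun p => |f p.1| * |f p.2|) m) :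
    ∫ p, f p.1 * f p.2 ∂m = ∫ x, f x ^ 2 ∂m.comap Function.diag +
      2 * ∫ p, (if p.2 < p.1 then f p.1 * f p.2 else 0) ∂m := by
  have hint : Integrable (fun p : α × α => f p.1 * f p.2) m :=
    hfm.mono' ((hf.comp measurable_fst).mul (hf.comp measurable_snd)).aestronglyMeasurable
      (ae_of_all _ fun p => by simp)
  have hdiag : ∫ x, f x ^ 2 ∂m.comap Function.diag = ∫ p in diagonal α, f p.1 * f p.2 ∂m := by
    simpa only [Function.diag_apply, sq] using integral_comap_diag m fun p => f p.1 * f p.2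
  rw [integral_eq_setIntegral_diagonal_add_two_mul hm hint fun p => mul_comm _ _, hdiag,
    ← integral_indicator (measurableSet_lt measurable_snd measurable_fst)]
  simp only [indicator_apply, mem_ofPred_eq]

end Order

end MeasureTheory

theorem stmt_14_general {Ω : Type*} [MeasureSpace Ω]
    (T : ℝ) (μ : SignedMeasure (ℝ × ℝ))
    (hsymm : ∀ A : Set (ℝ × ℝ), MeasurableSet A → μ A = μ (Prod.swap ⁻¹' A))
    (hsupp : μ.totalVariation ((Icc 0 T ×ˢ Icc 0 T)ᶜ) = 0)
    (μD : SignedMeasure ℝ)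
    (hμD : ∀ t ∈ Icc (0:ℝ) T, μD (Icc 0 t) = μ {p : ℝ × ℝ | p.1 = p.2 ∧ p.1 ∈ Icc 0 t})
    (hμDsupp : μD.totalVariation ((Icc (0:ℝ) T)ᶜ) = 0)
    (W : (ℝ → ℝ) → Ω → ℝ)
    (f : ℝ → ℝ) (hf : Measurable f)
    (hfμ : Integrable (fun p : ℝ × ℝ => |f p.1| * |f p.2|) μ.totalVariation)
    (hiso : ∫ ω, (W f ω) ^ 2 = sintegral μ (fun p => f p.1 * f p.2)) :
    ∫ ω, (W f ω) ^ 2 =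
      sintegral μD (fun s => (f s) ^ 2) +
        2 * sintegral μ (fun p => if p.2 < p.1 then f p.1 * f p.2 else 0) := by
  have hswap := μ.map_symm_toJordanDecomposition_eq_self MeasurableEquiv.prodComm fun A hA => by
    change μ (Prod.swap '' A) = μ A
    rw [image_swap_eq_preimage_swap, ← hsymm A hA]
  have hdiag := SignedMeasure.toJordanDecomposition_eq_comap_diag hsupp hμDsupp hμD
  obtain ⟨hintPos, hintNeg⟩ := integrable_add_measure.1 hfμ
  rw [hiso, sintegral, sintegral, sintegral, hdiag, JordanDecomposition.comap_posPart,
    JordanDecomposition.comap_negPart,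
    integral_mul_eq_integral_comap_diag_add_two_mul hswap.1 hf hintPos,
    integral_mul_eq_integral_comap_diag_add_two_mul hswap.2 hf hintNeg]
  ring

theorem stmt_14 {Ω : Type*} [MeasureSpace Ω] [IsProbabilityMeasure (volume : Measure Ω)]
    (T : ℝ) (hT : 0 < T) (μ : SignedMeasure (ℝ × ℝ))
    (hsymm : ∀ A : Set (ℝ × ℝ), MeasurableSet A → μ A = μ (Prod.swap ⁻¹' A))
    (hsupp : μ.totalVariation ((Icc 0 T ×ˢ Icc 0 T)ᶜ) = 0)
    (μD : SignedMeasure ℝ)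
    (hμD : ∀ t ∈ Icc (0:ℝ) T, μD (Icc 0 t) = μ {p : ℝ × ℝ | p.1 = p.2 ∧ p.1 ∈ Icc 0 t})
    (hμDsupp : μD.totalVariation ((Icc (0:ℝ) T)ᶜ) = 0)
    (W : (ℝ → ℝ) → Ω → ℝ)
    (f : ℝ → ℝ) (hf : Measurable f)
    (hfμ : Integrable (fun p : ℝ × ℝ => |f p.1| * |f p.2|) μ.totalVariation)
    (hiso : ∫ ω, (W f ω) ^ 2 = sintegral μ (fun p => f p.1 * f p.2)) :
    ∫ ω, (W f ω) ^ 2 =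
      sintegral μD (fun s => (f s) ^ 2) +
        2 * sintegral μ (fun p => if p.2 < p.1 then f p.1 * f p.2 else 0) :=
  stmt_14_general T μ hsymm hsupp μD hμD hμDsupp W f hf hfμ hiso
end
end
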